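/- Let ε and ρ be finite positive Borel measures on ℝ² of equal total mass N, let θ₁, θ₂ : ℝ² → [0,1] be Lipschitz continuous with Lipschitz constants Lip_{θ₁}, Lip_{θ₂}, and let x₁, x₂ ∈ ℝ². Set μⁱ = θ_i(x_i) ε + (1 − θ_i(x_i)) ρ for i = 1, 2. Then W₁(μ¹, μ²) ≤ ( ‖θ₂ − θ₁‖_∞ + min{Lip_{θ₁}, Lip_{θ₂}} · |x₂ − x₁| ) · W₁(ε, ρ). -/

import Mathlib

/-!
Both measures are mixtures of `ε` and `ρ`, so for every test function `φ` integrable for both,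
`∫ φ ∂μ¹ - ∫ φ ∂μ² = (θ₁ x₁ - θ₂ x₂) * (∫ φ ∂ε - ∫ φ ∂ρ)`. Taking suprema gives
`W1 μ¹ μ² = |θ₁ x₁ - θ₂ x₂| * W1 ε ρ`, and `|θ₁ x₁ - θ₂ x₂|` is bounded by passing through
`θ₁ x₂` or through `θ₂ x₁`.

In Lean, non-integrable integrals and unbounded suprema are `0`. If a 1-Lipschitz `φ` is
integrable for exactly one of `ε`, `ρ`, the bounded truncations `min |φ| n` make both suprema
unbounded, so both sides of the identity vanish.
-/

open MeasureTheory Real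

noncomputable section

/-- ℝ² with the Euclidean norm. -/
abbrev E2 : Type := EuclideanSpace ℝ (Fin 2)

/-- First Wasserstein distance via Kantorovich–Rubinstein duality. -/
noncomputable def W1 (μ ν : Measure E2) : ℝ :=
  ⨆ φ : {φ : E2 → ℝ // LipschitzWith 1 φ}, |(∫ y, φ.1 y ∂μ) - ∫ y, φ.1 y ∂ν|

/-- The multiscale measure `θ(x) ε + (1 - θ(x)) ρ`. -/
noncomputable def multiscale (ε ρ : Measure E2) (θ : E2 → ℝ) (x : E2) : Measure E2 :=
  ENNReal.ofReal (θ x) • ε + ENNReal.ofReal (1 - θ x) • ρ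

open Filter Set Topology

lemma LipschitzWith.abs {α : Type*} [PseudoEMetricSpace α] {K : NNReal} {f : α → ℝ}
    (hf : LipschitzWith K f) : LipschitzWith K fun x ↦ |f x| := by
  simpa [Function.comp_def] using lipschitzWith_one_norm.comp hf

section Truncation

variable {α : Type*} [MeasurableSpace α] {μ : Measure α}

lemma integrable_min_abs_natCast [IsFiniteMeasure μ] {f : α → ℝ}
    (hf : AEStronglyMeasurable f μ) (n : ℕ) : Integrable (fun x ↦ min |f x| n) μ :=
  .of_bound (hf.norm.inf aestronglyMeasurable_const) n <| .of_forall fun x ↦ by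
    rw [Real.norm_eq_abs, abs_of_nonneg (le_min (abs_nonneg _) n.cast_nonneg)]
    exact min_le_right _ _

lemma integrable_of_forall_integral_min_abs_le [IsFiniteMeasure μ] {f : α → ℝ}
    (hf : AEStronglyMeasurable f μ) {K : ℝ} (hK : ∀ n : ℕ, ∫ x, min |f x| n ∂μ ≤ K) :
    Integrable f μ := by
  refine ⟨hf, (hasFiniteIntegral_iff_norm f).2 ?_⟩
  have h_tendsto : Tendsto (fun n : ℕ ↦ ∫⁻ x, ENNReal.ofReal (min |f x| n) ∂μ) atTop
      (𝓝 (∫⁻ x, ENNReal.ofReal ‖f x‖ ∂μ)) := by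
    refine lintegral_tendsto_of_tendsto_of_monotone
      (fun n ↦ (integrable_min_abs_natCast hf n).aemeasurable.ennreal_ofReal)
      (.of_forall fun x m n hmn ↦
        ENNReal.ofReal_le_ofReal (min_le_min_left _ (by exact_mod_cast hmn)))
      (.of_forall fun x ↦ ?_)
    obtain ⟨n₀, hn₀⟩ := exists_nat_ge |f x|
    refine tendsto_atTop_of_eventually_const (i₀ := n₀) fun n hn ↦ ?_
    rw [Real.norm_eq_abs, min_eq_left (hn₀.trans (by exact_mod_cast hn))]
  refine lt_of_le_of_lt (le_of_tendsto' h_tendsto fun n ↦ ?_) (ENNReal.ofReal_lt_top (r := K))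
  rw [← ofReal_integral_eq_lintegral_ofReal (integrable_min_abs_natCast hf n)
    (.of_forall fun x ↦ le_min (abs_nonneg _) n.cast_nonneg)]
  exact ENNReal.ofReal_le_ofReal (hK n)

end Truncation

lemma exists_lipschitzWith_lt_abs_integral_sub {α : Type*} [PseudoEMetricSpace α]
    [MeasurableSpace α] [OpensMeasurableSpace α] {μ ν : Measure α}
    [IsFiniteMeasure μ] [IsFiniteMeasure ν] {K : NNReal} {φ : α → ℝ} (hφ : LipschitzWith K φ)
    (hμ : Integrable φ μ) (hν : ¬ Integrable φ ν) (M : ℝ) :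
    ∃ ψ : α → ℝ, LipschitzWith K ψ ∧ Integrable ψ μ ∧ Integrable ψ ν ∧
      M < |∫ x, ψ x ∂μ - ∫ x, ψ x ∂ν| := by
  have hφ_meas : ∀ κ : Measure α, AEStronglyMeasurable φ κ :=
    fun _ ↦ hφ.continuous.aestronglyMeasurable
  obtain ⟨n, hn⟩ : ∃ n : ℕ, M + ∫ x, |φ x| ∂μ < ∫ x, min |φ x| n ∂ν := by
    by_contra! h
    exact hν (integrable_of_forall_integral_min_abs_le (hφ_meas ν) h)
  refine ⟨fun x ↦ min |φ x| n, hφ.abs.min_const n, integrable_min_abs_natCast (hφ_meas μ) n,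
    integrable_min_abs_natCast (hφ_meas ν) n, ?_⟩
  have hμ_le : ∫ x, min |φ x| n ∂μ ≤ ∫ x, |φ x| ∂μ :=
    integral_mono (integrable_min_abs_natCast (hφ_meas μ) n) hμ.abs fun x ↦ min_le_left _ _
  rw [abs_sub_comm]
  exact (by linarith : M < _).trans_le (le_abs_self _)

section Mixture

variable {α : Type*} [MeasurableSpace α]

def mixture (ε ρ : Measure α) (s : ℝ) : Measure α :=
  ENNReal.ofReal s • ε + ENNReal.ofReal (1 - s) • ρ

variable {ε ρ : Measure α} {s : ℝ}

lemma integral_mixture (hs : s ∈ Icc (0 : ℝ) 1) {φ : α → ℝ} (hε : Integrable φ ε)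
    (hρ : Integrable φ ρ) :
    ∫ x, φ x ∂mixture ε ρ s = s * ∫ x, φ x ∂ε + (1 - s) * ∫ x, φ x ∂ρ := by
  rw [mixture, integral_add_measure (hε.smul_measure ENNReal.ofReal_ne_top)
    (hρ.smul_measure ENNReal.ofReal_ne_top), integral_smul_measure, integral_smul_measure,
    ENNReal.toReal_ofReal hs.1, ENNReal.toReal_ofReal (sub_nonneg.2 hs.2), smul_eq_mul,
    smul_eq_mul]

lemma Integrable.of_mixture (hs : 0 ≤ s) {φ : α → ℝ}
    (h : Integrable φ (mixture ε ρ s)) : Integrable φ ε ∨ Integrable φ ρ := by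
  rw [mixture, integrable_add_measure] at h
  rcases hs.eq_or_lt with rfl | hs₀
  · right
    simpa using h.2
  · left
    exact (integrable_smul_measure (by simpa using hs₀) ENNReal.ofReal_ne_top).1 h.1

end Mixture

lemma W1_nonneg (μ ν : Measure E2) : 0 ≤ W1 μ ν :=
  Real.iSup_nonneg fun _ ↦ abs_nonneg _

lemma W1_self (μ : Measure E2) : W1 μ μ = 0 := by
  simp [W1]

theorem W1_mixture (ε ρ : Measure E2) [IsFiniteMeasure ε] [IsFiniteMeasure ρ] {s t : ℝ}
    (hs : s ∈ Icc (0 : ℝ) 1) (ht : t ∈ Icc (0 : ℝ) 1) :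
    W1 (mixture ε ρ s) (mixture ε ρ t) = |s - t| * W1 ε ρ := by
  have h_sub : ∀ φ : E2 → ℝ, (Integrable φ ε ↔ Integrable φ ρ) →
      ∫ x, φ x ∂mixture ε ρ s - ∫ x, φ x ∂mixture ε ρ t =
        (s - t) * (∫ x, φ x ∂ε - ∫ x, φ x ∂ρ) := by
    intro φ hφ
    by_cases hε : Integrable φ ε
    · rw [integral_mixture hs hε (hφ.1 hε), integral_mixture ht hε (hφ.1 hε)]
      ring
    · have hρ : ¬ Integrable φ ρ := mt hφ.2 hε
      have h_mix : ∀ {u : ℝ}, 0 ≤ u → ¬ Integrable φ (mixture ε ρ u) :=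
        fun hu h ↦ (Integrable.of_mixture hu h).elim hε hρ
      rw [integral_undef (h_mix hs.1), integral_undef (h_mix ht.1), integral_undef hε,
        integral_undef hρ]
      ring
  by_cases h_iff : ∀ φ : {φ : E2 → ℝ // LipschitzWith 1 φ}, Integrable φ.1 ε ↔ Integrable φ.1 ρ
  · simp only [W1, Real.mul_iSup_of_nonneg (abs_nonneg (s - t)), ← abs_mul,
      h_sub _ (h_iff _)]
  obtain rfl | hst := eq_or_ne s t
  · rw [W1_self, sub_self, abs_zero, zero_mul]
  have h_unbdd : ∀ M, ∃ ψ : E2 → ℝ, LipschitzWith 1 ψ ∧ Integrable ψ ε ∧ Integrable ψ ρ ∧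
      M < |∫ x, ψ x ∂ε - ∫ x, ψ x ∂ρ| := by
    obtain ⟨⟨φ, hφ⟩, h⟩ := not_forall.1 h_iff
    intro M
    by_cases hε : Integrable φ ε
    · exact exists_lipschitzWith_lt_abs_integral_sub hφ hε (fun hρ ↦ (not_iff.1 h).2 hρ hε) M
    · obtain ⟨ψ, hψ, hψρ, hψε, hM⟩ :=
        exists_lipschitzWith_lt_abs_integral_sub hφ ((not_iff.1 h).1 hε) hε M
      exact ⟨ψ, hψ, hψε, hψρ, abs_sub_comm (∫ x, ψ x ∂ρ) _ ▸ hM⟩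
  -- both suprema are unbounded, hence `0` by convention
  rw [W1, W1, Real.iSup_of_not_bddAbove, Real.iSup_of_not_bddAbove, mul_zero]
  · refine not_bddAbove_iff.2 fun M ↦ ?_
    obtain ⟨ψ, hψ, -, -, hM⟩ := h_unbdd M
    exact ⟨_, ⟨⟨ψ, hψ⟩, rfl⟩, hM⟩
  · refine not_bddAbove_iff.2 fun M ↦ ?_
    have h_pos : 0 < |s - t| := abs_pos.2 (sub_ne_zero.2 hst)
    obtain ⟨ψ, hψ, hψε, hψρ, hM⟩ := h_unbdd (M / |s - t|)
    refine ⟨_, ⟨⟨ψ, hψ⟩, rfl⟩, ?_⟩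
    dsimp only
    rwa [h_sub ψ (iff_of_true hψε hψρ), abs_mul, ← div_lt_iff₀' h_pos]

lemma abs_sub_le_iSup_add_min_mul {α : Type*} [PseudoMetricSpace α] {θ₁ θ₂ : α → ℝ}
    {L₁ L₂ : NNReal} (h₁ : LipschitzWith L₁ θ₁) (h₂ : LipschitzWith L₂ θ₂)
    (h_bdd : BddAbove (range fun x ↦ |θ₂ x - θ₁ x|)) (x₁ x₂ : α) :
    |θ₁ x₁ - θ₂ x₂| ≤ (⨆ x, |θ₂ x - θ₁ x|) + min (L₁ : ℝ) L₂ * dist x₁ x₂ := by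
  have h_sup : ∀ x, |θ₂ x - θ₁ x| ≤ ⨆ x, |θ₂ x - θ₁ x| := le_ciSup h_bdd
  rw [min_mul_of_nonneg _ _ dist_nonneg, add_min]
  refine le_min ?_ ?_
  · calc |θ₁ x₁ - θ₂ x₂| ≤ |θ₁ x₁ - θ₁ x₂| + |θ₁ x₂ - θ₂ x₂| := abs_sub_le _ _ _
      _ ≤ L₁ * dist x₁ x₂ + ⨆ x, |θ₂ x - θ₁ x| := by
        gcongr
        · exact h₁.dist_le_mul x₁ x₂
        · exact abs_sub_comm (θ₁ x₂) _ ▸ h_sup x₂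
      _ = _ := add_comm _ _
  · calc |θ₁ x₁ - θ₂ x₂| ≤ |θ₁ x₁ - θ₂ x₁| + |θ₂ x₁ - θ₂ x₂| := abs_sub_le _ _ _
      _ ≤ (⨆ x, |θ₂ x - θ₁ x|) + L₂ * dist x₁ x₂ := by
        gcongr
        · exact abs_sub_comm (θ₁ x₁) _ ▸ h_sup x₁
        · exact h₂.dist_le_mul x₁ x₂

theorem stmt3_general
    (ε ρ : Measure E2) [IsFiniteMeasure ε] [IsFiniteMeasure ρ]
    (θ₁ θ₂ : E2 → ℝ) (Lθ₁ Lθ₂ : NNReal)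
    (hθ₁lip : LipschitzWith Lθ₁ θ₁) (hθ₂lip : LipschitzWith Lθ₂ θ₂)
    (hθ₁01 : ∀ x, θ₁ x ∈ Set.Icc (0 : ℝ) 1) (hθ₂01 : ∀ x, θ₂ x ∈ Set.Icc (0 : ℝ) 1)
    (x₁ x₂ : E2) :
    W1 (multiscale ε ρ θ₁ x₁) (multiscale ε ρ θ₂ x₂) ≤
      ((⨆ x : E2, |θ₂ x - θ₁ x|) + min (Lθ₁ : ℝ) (Lθ₂ : ℝ) * ‖x₂ - x₁‖) * W1 ε ρ := by
  have h_bdd : BddAbove (range fun x ↦ |θ₂ x - θ₁ x|) := by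
    refine ⟨1, forall_mem_range.2 fun x ↦ abs_sub_le_iff.2 ⟨?_, ?_⟩⟩ <;>
      linarith [(hθ₁01 x).1, (hθ₁01 x).2, (hθ₂01 x).1, (hθ₂01 x).2]
  calc W1 (multiscale ε ρ θ₁ x₁) (multiscale ε ρ θ₂ x₂)
      = |θ₁ x₁ - θ₂ x₂| * W1 ε ρ := W1_mixture ε ρ (hθ₁01 x₁) (hθ₂01 x₂)
    _ ≤ _ := by
      rw [← dist_eq_norm, dist_comm]
      gcongr
      · exact W1_nonneg ε ρ
      · exact abs_sub_le_iSup_add_min_mul hθ₁lip hθ₂lip h_bdd x₁ x₂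

theorem stmt3
    (N : NNReal)
    (ε ρ : Measure E2) [IsFiniteMeasure ε] [IsFiniteMeasure ρ]
    (hε : ε Set.univ = (N : ENNReal)) (hρ : ρ Set.univ = (N : ENNReal))
    (θ₁ θ₂ : E2 → ℝ) (Lθ₁ Lθ₂ : NNReal)
    (hθ₁lip : LipschitzWith Lθ₁ θ₁) (hθ₂lip : LipschitzWith Lθ₂ θ₂)
    (hθ₁01 : ∀ x, θ₁ x ∈ Set.Icc (0 : ℝ) 1) (hθ₂01 : ∀ x, θ₂ x ∈ Set.Icc (0 : ℝ) 1)
    (x₁ x₂ : E2) :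
    W1 (multiscale ε ρ θ₁ x₁) (multiscale ε ρ θ₂ x₂) ≤
      ((⨆ x : E2, |θ₂ x - θ₁ x|) + min (Lθ₁ : ℝ) (Lθ₂ : ℝ) * ‖x₂ - x₁‖) * W1 ε ρ :=
  stmt3_general ε ρ θ₁ θ₂ Lθ₁ Lθ₂ hθ₁lip hθ₂lip hθ₁01 hθ₂01 x₁ x₂
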